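/- Suppose G is a countable group that is the union of an increasing sequence of its subgroups {G_i}_{i≥1} with the property that the index of G_i in G_{i+1} is infinite for each i ≥ 1. Then there is a left-invariant integral ultrametric d_G on G such that every separable metric space of asymptotic dimension 0 coarsely embeds into (G, d_G). -/

import Mathlib

/-- The distance of a metric space is an ultrametric. -/
def IsUltra (X : Type*) [MetricSpace X] : Prop :=
  ∀ x y z : X, dist x z ≤ max (dist x y) (dist y z)

/-- All distances of the metric space are non-negative integers. -/
def IsIntegralDist (X : Type*) [MetricSpace X] : Prop :=
  ∀ x y : X, ∃ n : ℕ, dist x y = n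

/-- The metric of the group `G` is left-invariant. -/
def LeftInvariantDist (G : Type*) [Group G] [MetricSpace G] : Prop :=
  ∀ g x y : G, dist (g * x) (g * y) = dist x y

/-- A metric space has asymptotic dimension `0` if for every `r > 0` the `r`-components of
the space (classes of the chain relation generated by `dist a b < r`) are uniformly
bounded. -/
def AsdimZero (X : Type*) [MetricSpace X] : Prop :=
  ∀ r : ℝ, r > 0 → ∃ B : ℝ, B > 0 ∧ ∀ x y : X,
    Relation.ReflTransGen (fun a b : X => dist a b < r) x y → dist x y ≤ B

/-- `f` is a coarse embedding: uniformly bornologous and uniformly proper. -/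
def CoarseEmbedding {X Y : Type*} [MetricSpace X] [MetricSpace Y] (f : X → Y) : Prop :=
  (∀ R : ℝ, R > 0 → ∃ S' : ℝ, S' > 0 ∧ ∀ x y : X, dist x y ≤ R → dist (f x) (f y) ≤ S') ∧
  (∀ R : ℝ, R > 0 → ∃ S' : ℝ, S' > 0 ∧ ∀ x y : X, dist (f x) (f y) ≤ R → dist x y ≤ S')

/-!
With `H₀ = ⊥` and `Hₙ₊₁ = Gₙ`, `d(x, y) = min {n | x⁻¹ y ∈ Hₙ}` is a left-invariant integral
ultrametric whose closed ball of radius `n + 1` about `1` is `Gₙ`.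
The `(n + 1)`-components of a separable `X` are countably many, so they can be numbered by
`βₙ : X → ℕ` with the component of a base point `x₀` numbered `0`. Picking `cₙ(k) ∈ Gₙ₊₁` in
pairwise distinct cosets of `Gₙ` with `cₙ(0) = 1`, the map `x ↦ ⋯ c₁(β₁ x) c₀(β₀ x)` (a finite
product, since `βₙ x = 0` once `n ≥ d(x, x₀)`) satisfies `f(x)⁻¹ f(y) ∈ Gₙ` iff `x` and `y` lie
in the same `(n + 1)`-component. Asymptotic dimension `0` then makes `f` a coarse embedding.
-/

section FiltrationMetric

variable {G : Type*} [Group G] {H : ℕ → Subgroup G}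

variable (H) in
noncomputable def filtrationLevel (g : G) : ℕ := sInf {n | g ∈ H n}

theorem filtrationLevel_le_iff (hH : Monotone H) (hex : ∀ g, ∃ n, g ∈ H n) {g : G} {n : ℕ} :
    filtrationLevel H g ≤ n ↔ g ∈ H n :=
  ⟨fun h => hH h (Nat.sInf_mem (hex g)), fun h => Nat.sInf_le h⟩

theorem filtrationLevel_inv (hH : Monotone H) (hex : ∀ g, ∃ n, g ∈ H n) (g : G) :
    filtrationLevel H g⁻¹ = filtrationLevel H g := by
  have key : ∀ g : G, filtrationLevel H g⁻¹ ≤ filtrationLevel H g := fun g =>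
    (filtrationLevel_le_iff hH hex).2 (inv_mem ((filtrationLevel_le_iff hH hex).1 le_rfl))
  exact le_antisymm (key g) (by simpa using key g⁻¹)

theorem filtrationLevel_mul_le (hH : Monotone H) (hex : ∀ g, ∃ n, g ∈ H n) (g h : G) :
    filtrationLevel H (g * h) ≤ max (filtrationLevel H g) (filtrationLevel H h) := by
  rw [filtrationLevel_le_iff hH hex]
  exact mul_mem (hH (le_max_left _ _) ((filtrationLevel_le_iff hH hex).1 le_rfl))
    (hH (le_max_right _ _) ((filtrationLevel_le_iff hH hex).1 le_rfl))

theorem filtrationLevel_eq_zero_iff (hH : Monotone H) (hex : ∀ g, ∃ n, g ∈ H n) (h0 : H 0 = ⊥)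
    {g : G} : filtrationLevel H g = 0 ↔ g = 1 := by
  rw [← Nat.le_zero, filtrationLevel_le_iff hH hex, h0, Subgroup.mem_bot]

theorem exists_metricSpace_of_filtration (hH : Monotone H) (hex : ∀ g, ∃ n, g ∈ H n)
    (h0 : H 0 = ⊥) :
    ∃ _ : MetricSpace G, LeftInvariantDist G ∧ IsUltra G ∧ IsIntegralDist G ∧
      ∀ (x y : G) (n : ℕ), dist x y ≤ n ↔ x⁻¹ * y ∈ H n := by
  have ultra (x y z : G) : filtrationLevel H (x⁻¹ * z) ≤
      max (filtrationLevel H (x⁻¹ * y)) (filtrationLevel H (y⁻¹ * z)) := by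
    simpa [mul_assoc] using filtrationLevel_mul_le hH hex (x⁻¹ * y) (y⁻¹ * z)
  let _ : MetricSpace G :=
    { dist x y := filtrationLevel H (x⁻¹ * y)
      dist_self x := by simp [(filtrationLevel_eq_zero_iff hH hex h0).2]
      dist_comm x y := by
        simp only [← filtrationLevel_inv hH hex (x⁻¹ * y), mul_inv_rev, inv_inv]
      dist_triangle x y z := by
        exact_mod_cast (ultra x y z).trans (max_le_add_of_nonneg (Nat.zero_le _) (Nat.zero_le _))
      eq_of_dist_eq_zero {x y} h := by
        rw [← inv_mul_eq_one, ← filtrationLevel_eq_zero_iff hH hex h0]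
        exact_mod_cast h }
  refine ⟨‹_›, fun g x y => ?_, fun x y z => ?_, fun x y => ⟨_, rfl⟩, fun x y n => ?_⟩
  · change (filtrationLevel H ((g * x)⁻¹ * (g * y)) : ℝ) = filtrationLevel H (x⁻¹ * y)
    group
  · change (filtrationLevel H (x⁻¹ * z) : ℝ) ≤
      max (filtrationLevel H (x⁻¹ * y) : ℝ) (filtrationLevel H (y⁻¹ * z))
    exact_mod_cast ultra x y z
  · exact Nat.cast_le.trans (filtrationLevel_le_iff hH hex)

end FiltrationMetric

section ChainRel

variable {X : Type*} [PseudoMetricSpace X]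

def ChainRel (r : ℝ) : X → X → Prop := Relation.ReflTransGen fun a b => dist a b < r

theorem ChainRel.of_dist_lt {r : ℝ} {x y : X} (h : dist x y < r) : ChainRel r x y :=
  .single h

theorem ChainRel.mono {r s : ℝ} (hrs : r ≤ s) {x y : X} (h : ChainRel r x y) : ChainRel s x y :=
  Relation.ReflTransGen.mono (fun _ _ hab => hab.trans_le hrs) x y h

theorem chainRel_equivalence (r : ℝ) : Equivalence (ChainRel (X := X) r) where
  refl _ := .refl
  symm h := by
    have : Std.Symm fun a b : X => dist a b < r := ⟨fun a b hab => by rwa [dist_comm]⟩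
    exact Relation.ReflTransGen.stdSymm.symm _ _ h
  trans := .trans

def chainSetoid (X : Type*) [PseudoMetricSpace X] (r : ℝ) : Setoid X :=
  ⟨ChainRel r, chainRel_equivalence r⟩

-- Every chain component is open, hence meets a countable dense set.
theorem countable_quotient_chainSetoid [TopologicalSpace.SeparableSpace X] {r : ℝ} (hr : 0 < r) :
    Countable (Quotient (chainSetoid X r)) := by
  obtain ⟨s, hs_count, hs_dense⟩ := TopologicalSpace.exists_countable_dense X
  have : Countable s := hs_count.to_subtype
  refine Function.Surjective.countable (f := fun y : s => Quotient.mk _ (y : X)) ?_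
  refine Quotient.ind fun x => ?_
  obtain ⟨y, hy, hxy⟩ := hs_dense.exists_dist_lt x hr
  exact ⟨⟨y, hy⟩, Quotient.sound (ChainRel.of_dist_lt (by rwa [dist_comm]))⟩

theorem exists_chainRel_index [TopologicalSpace.SeparableSpace X] {r : ℝ} (hr : 0 < r) (x₀ : X) :
    ∃ β : X → ℕ, β x₀ = 0 ∧ ∀ x y, β x = β y ↔ ChainRel r x y := by
  have := countable_quotient_chainSetoid (X := X) hr
  obtain ⟨e, he⟩ := exists_injective_nat (Quotient (chainSetoid X r))
  classical
  let σ := Equiv.swap (e (Quotient.mk _ x₀)) 0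
  refine ⟨fun x => σ (e (Quotient.mk _ x)), Equiv.swap_apply_left _ _, fun x y => ?_⟩
  rw [σ.apply_eq_iff_eq, he.eq_iff]
  exact Quotient.eq

theorem exists_chainRel_digits (X : Type*) [PseudoMetricSpace X]
    [TopologicalSpace.SeparableSpace X] :
    ∃ b : X → ℕ → ℕ, (∀ x, ∃ K, ∀ m, K ≤ m → b x m = 0) ∧
      ∀ (n : ℕ) (x y : X), (∀ m, n ≤ m → b x m = b y m) ↔ ChainRel (n + 1) x y := by
  rcases isEmpty_or_nonempty X with hX | ⟨⟨x₀⟩⟩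
  · exact ⟨fun _ _ => 0, isEmptyElim, fun _ x => isEmptyElim x⟩
  choose β hβ₀ hβ using fun n : ℕ => exists_chainRel_index (n.cast_add_one_pos (α := ℝ)) x₀
  refine ⟨fun x n => β n x, fun x => ⟨⌈dist x x₀⌉₊, fun m hm => ?_⟩, fun n x y => ?_⟩
  · rw [← hβ₀ m, hβ]
    refine ChainRel.of_dist_lt ((Nat.le_ceil _).trans_lt ?_)
    exact_mod_cast Nat.lt_succ_of_le hm
  · refine ⟨fun h => (hβ n x y).1 (h n le_rfl), fun h m hm => (hβ m x y).2 (h.mono ?_)⟩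
    exact_mod_cast Nat.succ_le_succ hm

end ChainRel

section DigitCoding

variable {G : Type*} [Group G]

theorem exists_seq_distinct_cosets_of_relIndex_eq_zero {H K : Subgroup G} (h : H.relIndex K = 0) :
    ∃ c : ℕ → G, c 0 = 1 ∧ (∀ k, c k ∈ K) ∧ ∀ k k', (c k)⁻¹ * c k' ∈ H → k = k' := by
  have : Infinite (K ⧸ H.subgroupOf K) := Subgroup.index_eq_zero_iff_infinite.mp h
  let e := Infinite.natEmbedding (K ⧸ H.subgroupOf K)
  let r : ℕ → K := fun k => (e k).out
  refine ⟨fun k => ((r 0)⁻¹ * r k : K), by simp, fun k => ((r 0)⁻¹ * r k).2, fun k k' hkk' => ?_⟩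
  have hmem : (r k)⁻¹ * r k' ∈ H.subgroupOf K := by
    rw [Subgroup.mem_subgroupOf]
    simpa [mul_assoc] using hkk'
  apply e.injective
  rw [← QuotientGroup.out_eq' (e k), ← QuotientGroup.out_eq' (e k')]
  exact QuotientGroup.eq.mpr hmem

variable (c : ℕ → ℕ → G)

def digitProd (b : ℕ → ℕ) : ℕ → G
  | 0 => 1
  | M + 1 => c M (b M) * digitProd b M

variable {c} {Gs : ℕ → Subgroup G}

theorem digitProd_mem (hmono : Monotone Gs) (hc : ∀ m k, c m k ∈ Gs (m + 1)) (b : ℕ → ℕ) :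
    ∀ M, digitProd c b M ∈ Gs M
  | 0 => one_mem _
  | M + 1 => mul_mem (hc M _) (hmono M.le_succ (digitProd_mem hmono hc b M))

theorem digitProd_eq_of_forall_le {b : ℕ → ℕ} {K : ℕ} (hc : ∀ m, c m 0 = 1)
    (hb : ∀ m, K ≤ m → b m = 0) {M : ℕ} (hKM : K ≤ M) : digitProd c b M = digitProd c b K := by
  induction M, hKM using Nat.le_induction with
  | base => rfl
  | succ M hKM ih => rw [digitProd, hb M hKM, hc, one_mul, ih]

theorem inv_digitProd_mul_mem_iff (hmono : Monotone Gs) (hc : ∀ m k, c m k ∈ Gs (m + 1))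
    (hsep : ∀ m k k', (c m k)⁻¹ * c m k' ∈ Gs m → k = k') (b b' : ℕ → ℕ) {n M : ℕ}
    (hnM : n ≤ M) :
    (digitProd c b M)⁻¹ * digitProd c b' M ∈ Gs n ↔ ∀ m, n ≤ m → m < M → b m = b' m := by
  induction M, hnM using Nat.le_induction with
  | base =>
    exact iff_of_true (mul_mem (inv_mem (digitProd_mem hmono hc b n)) (digitProd_mem hmono hc b' n))
      fun m hnm hmn => absurd hnm hmn.not_ge
  | succ M hnM ih =>
    simp only [digitProd, Nat.lt_succ_iff_lt_or_eq]
    by_cases hM : b M = b' M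
    · rw [hM, mul_inv_rev, mul_assoc, inv_mul_cancel_left, ih]
      exact ⟨fun h m hnm hm => hm.elim (h m hnm) (· ▸ hM), fun h m hnm hm => h m hnm (.inl hm)⟩
    -- Otherwise `(c M (b M))⁻¹ * c M (b' M) = u * lhs * v⁻¹` with `u, v ∈ Gs M` lies in `Gs M`.
    refine iff_of_false (fun h => hM (hsep M _ _ ?_)) fun h => hM (h M hnM (.inr rfl))
    have hu := digitProd_mem hmono hc b M
    have hv := digitProd_mem hmono hc b' M
    convert mul_mem (mul_mem hu (hmono hnM h)) (inv_mem hv) using 1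
    group

variable (Gs) in
theorem exists_map_inv_mul_mem_iff (hmono : Monotone Gs)
    (hindex : ∀ n, (Gs n).relIndex (Gs (n + 1)) = 0) {ι : Type*} (b : ι → ℕ → ℕ)
    (hb : ∀ i, ∃ K, ∀ m, K ≤ m → b i m = 0) :
    ∃ f : ι → G, ∀ n i j, (f i)⁻¹ * f j ∈ Gs n ↔ ∀ m, n ≤ m → b i m = b j m := by
  choose c hc₀ hc hsep using fun n => exists_seq_distinct_cosets_of_relIndex_eq_zero (hindex n)
  choose K hK using hb
  refine ⟨fun i => digitProd c (b i) (K i), fun n i j => ?_⟩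
  let M := max (max (K i) (K j)) n
  have hiM : K i ≤ M := (le_max_left _ _).trans (le_max_left _ _)
  have hjM : K j ≤ M := (le_max_right _ _).trans (le_max_left _ _)
  dsimp only
  rw [← digitProd_eq_of_forall_le hc₀ (hK i) hiM, ← digitProd_eq_of_forall_le hc₀ (hK j) hjM,
    inv_digitProd_mul_mem_iff hmono hc hsep _ _ (le_max_right _ _)]
  refine ⟨fun h m hnm => ?_, fun h m hnm _ => h m hnm⟩
  rcases lt_or_ge m M with hmM | hMm
  · exact h m hnm hmM
  · rw [hK i m (hiM.trans hMm), hK j m (hjM.trans hMm)]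

end DigitCoding

theorem coarseEmbedding_of_dist_le_iff_chainRel {X Y : Type*} [MetricSpace X] [MetricSpace Y]
    (hX : AsdimZero X) {f : X → Y}
    (hf : ∀ (n : ℕ) (x y : X), dist (f x) (f y) ≤ n + 1 ↔ ChainRel (n + 1) x y) :
    CoarseEmbedding f := by
  refine ⟨fun R _ => ⟨⌈R⌉₊ + 1, by positivity, fun x y hxy => (hf _ x y).2 ?_⟩,
    fun R _ => ?_⟩
  · exact ChainRel.of_dist_lt (hxy.trans_lt ((Nat.le_ceil R).trans_lt (lt_add_one _)))
  · obtain ⟨B, hB, hBbound⟩ := hX (⌈R⌉₊ + 1) (by positivity)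
    refine ⟨B, hB, fun x y hxy => hBbound x y ((hf _ x y).1 ?_)⟩
    exact hxy.trans ((Nat.le_ceil R).trans (le_add_of_nonneg_right zero_le_one))

namespace Subgroup

variable {G : Type*} [Group G]

def consBot (Gs : ℕ → Subgroup G) : ℕ → Subgroup G
  | 0 => ⊥
  | n + 1 => Gs n

theorem monotone_consBot {Gs : ℕ → Subgroup G} (hmono : Monotone Gs) : Monotone (consBot Gs) :=
  monotone_nat_of_le_succ fun
    | 0 => bot_le
    | n + 1 => hmono n.le_succ

end Subgroup

theorem universal_group_for_separable_asdim_zero_general {G : Type*} [Group G]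
    (Gs : ℕ → Subgroup G) (hmono : Monotone Gs)
    (hindex : ∀ i : ℕ, (Gs i).relIndex (Gs (i + 1)) = 0)
    (hunion : ∀ g : G, ∃ i : ℕ, g ∈ Gs i) :
    ∃ _ : MetricSpace G, LeftInvariantDist G ∧ IsUltra G ∧ IsIntegralDist G ∧
      ∀ (X : Type u) (_ : MetricSpace X), TopologicalSpace.SeparableSpace X →
        AsdimZero X → ∃ f : X → G, CoarseEmbedding f := by
  obtain ⟨_, hinv, hultra, hint, hdist⟩ := exists_metricSpace_of_filtration
    (Subgroup.monotone_consBot hmono) (fun g => (hunion g).elim fun i hi => ⟨i + 1, hi⟩)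
    rfl
  refine ⟨_, hinv, hultra, hint, fun X _ _ hX => ?_⟩
  obtain ⟨b, hb, hbchain⟩ := exists_chainRel_digits X
  obtain ⟨f, hf⟩ := exists_map_inv_mul_mem_iff Gs hmono hindex b hb
  refine ⟨f, coarseEmbedding_of_dist_le_iff_chainRel hX fun n x y => ?_⟩
  rw [← hbchain, ← hf, ← Nat.cast_add_one, hdist]
  rfl

/-- Corollary 6.7: if `G` is a countable group that is the union of an increasing sequence of
subgroups `Gs i` with the index of `Gs i` in `Gs (i+1)` infinite for every `i`, then `G`
carries a left-invariant integral ultrametric making it a universal space in the category of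
separable metric spaces of asymptotic dimension `0`. -/
theorem universal_group_for_separable_asdim_zero {G : Type*} [Group G] [Countable G]
    (Gs : ℕ → Subgroup G) (hmono : Monotone Gs)
    (hindex : ∀ i : ℕ, (Gs i).relIndex (Gs (i + 1)) = 0)
    (hunion : ∀ g : G, ∃ i : ℕ, g ∈ Gs i) :
    ∃ _ : MetricSpace G, LeftInvariantDist G ∧ IsUltra G ∧ IsIntegralDist G ∧
      ∀ (X : Type u) (_ : MetricSpace X), TopologicalSpace.SeparableSpace X →
        AsdimZero X → ∃ f : X → G, CoarseEmbedding f :=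
  universal_group_for_separable_asdim_zero_general Gs hmono hindex hunion
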